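/- For any group G presented as F/R with F free and any prime ℓ, if a commutator [e_1, e_2] of two elements e_1, e_2 ∈ F lies in [F,R]·R^ℓ, then the homology class of the cycle [ē_1] ∧ [ē_2] = [ē_1|ē_2] - [ē_2|ē_1] vanishes in H_2(G; F_ℓ), where ē_i denotes the image of e_i in G, provided ē_1 and ē_2 commute in G. -/

import Mathlib

/-- The boundary `C₂ → C₁` of the inhomogeneous bar complex computing group homology:
`∂[g₁|g₂] = [g₂] - [g₁g₂] + [g₁]`. -/
noncomputable def barD21 (k : Type) [CommRing k] (G : Type) [Group G] :
    ((G × G) →₀ k) →ₗ[k] (G →₀ k) :=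
  Finsupp.lift (G →₀ k) k (G × G) fun p =>
    Finsupp.single p.2 1 - Finsupp.single (p.1 * p.2) 1 + Finsupp.single p.1 1

/-- The boundary `C₃ → C₂` of the inhomogeneous bar complex computing group homology:
`∂[g₁|g₂|g₃] = [g₂|g₃] - [g₁g₂|g₃] + [g₁|g₂g₃] - [g₁|g₂]`. -/
noncomputable def barD32 (k : Type) [CommRing k] (G : Type) [Group G] :
    ((G × G × G) →₀ k) →ₗ[k] ((G × G) →₀ k) :=
  Finsupp.lift ((G × G) →₀ k) k (G × G × G) fun t =>
    Finsupp.single (t.2.1, t.2.2) 1 - Finsupp.single (t.1 * t.2.1, t.2.2) 1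
      + Finsupp.single (t.1, t.2.1 * t.2.2) 1 - Finsupp.single (t.1, t.2.1) 1

/-- Second group homology `H₂(G; k)`: 2-cycles modulo 2-boundaries of the inhomogeneous
bar complex. -/
noncomputable abbrev groupH2 (k : Type) [CommRing k] (G : Type) [Group G] : Type :=
  @HasQuotient.Quotient ↥(LinearMap.ker (barD21 k G))
    (Submodule k ↥(LinearMap.ker (barD21 k G)))
    (@Submodule.hasQuotient k ↥(LinearMap.ker (barD21 k G)) _ _ _)
    ((LinearMap.range (barD32 k G)).comap (LinearMap.ker (barD21 k G)).subtype)

/-! A normalized 2-cocycle `c` on `G` with values in a trivial module `Q` defines a central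
extension `Q ↪ E ↠ G`, in which lifts of commuting `x, y ∈ G` have commutator
`c(x, y) - c(y, x) ∈ Q`. Taking for `c` the universal cocycle `(g, h) ↦ [g|h] - [1|1]` with
values in 2-chains modulo boundaries, the projection `F ↠ G` lifts to `F → E` since `F` is free.
The lift kills `[F, R]` because `R` maps into the central subgroup `Q`, and kills `Rˡ` because
`ℓ • Q = 0`; so if `[e₁, e₂] ∈ [F, R] Rˡ`, then `[ē₁|ē₂] - [ē₂|ē₁]` is a boundary. -/

open scoped commutatorElement

structure NormalizedTwoCocycle (G Q : Type*) [Group G] [AddCommGroup Q] where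
  toFun : G → G → Q
  map_one_one : toFun 1 1 = 0
  cocycle : ∀ g h k : G, toFun (g * h) k + toFun g h = toFun h k + toFun g (h * k)

namespace NormalizedTwoCocycle

variable {G Q : Type*} [Group G] [AddCommGroup Q] (c : NormalizedTwoCocycle G Q)

instance : CoeFun (NormalizedTwoCocycle G Q) fun _ => G → G → Q := ⟨toFun⟩

lemma map_one_left (g : G) : c 1 g = 0 := by
  simpa [c.map_one_one, eq_comm] using c.cocycle 1 1 g

lemma map_one_right (g : G) : c g 1 = 0 := by
  simpa [c.map_one_one] using c.cocycle g 1 1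

@[ext]
structure Extension (c : NormalizedTwoCocycle G Q) where
  fst : Q
  snd : G

namespace Extension

variable {c}

instance : One c.Extension := ⟨⟨0, 1⟩⟩
instance : Mul c.Extension := ⟨fun x y => ⟨x.fst + y.fst + c x.snd y.snd, x.snd * y.snd⟩⟩
instance : Inv c.Extension := ⟨fun x => ⟨-x.fst - c x.snd⁻¹ x.snd, x.snd⁻¹⟩⟩

lemma mul_def (x y : c.Extension) :
    x * y = ⟨x.fst + y.fst + c x.snd y.snd, x.snd * y.snd⟩ := rfl

lemma one_def : (1 : c.Extension) = ⟨0, 1⟩ := rfl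

lemma inv_def (x : c.Extension) : x⁻¹ = ⟨-x.fst - c x.snd⁻¹ x.snd, x.snd⁻¹⟩ := rfl

instance : Group c.Extension :=
  Group.ofLeftAxioms
    (fun x y z => Extension.ext (by
      change x.fst + y.fst + c x.snd y.snd + z.fst + c (x.snd * y.snd) z.snd
        = x.fst + (y.fst + z.fst + c y.snd z.snd) + c x.snd (y.snd * z.snd)
      linear_combination (norm := abel) c.cocycle x.snd y.snd z.snd) (mul_assoc _ _ _))
    (fun x => Extension.ext (by simp [mul_def, one_def, map_one_left]) (one_mul _))
    (fun x => Extension.ext (by simp only [mul_def, one_def, inv_def]; abel) (inv_mul_cancel _))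

end Extension

def proj : c.Extension →* G where
  toFun := Extension.snd
  map_one' := rfl
  map_mul' _ _ := rfl

@[simp]
lemma proj_apply (x : c.Extension) : c.proj x = x.snd := rfl

def inl : Multiplicative Q →* c.Extension where
  toFun q := ⟨q.toAdd, 1⟩
  map_one' := rfl
  map_mul' a b := Extension.ext (by simp [Extension.mul_def, map_one_one]) (mul_one 1).symm

variable {c}

lemma inl_injective : Function.Injective c.inl :=
  fun _ _ h => congrArg Extension.fst h

lemma inl_mul (q : Multiplicative Q) (y : c.Extension) :
    c.inl q * y = ⟨q.toAdd + y.fst, y.snd⟩ :=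
  Extension.ext (by simp [inl, Extension.mul_def, map_one_left]) (one_mul _)

lemma eq_inl_of_proj_eq_one {x : c.Extension} (hx : c.proj x = 1) :
    x = c.inl (.ofAdd x.fst) :=
  Extension.ext rfl hx

lemma commute_of_proj_eq_one {x : c.Extension} (hx : c.proj x = 1) (y : c.Extension) :
    Commute x y := by
  rw [eq_inl_of_proj_eq_one hx]
  refine Extension.ext ?_ ?_
  · simp [inl, Extension.mul_def, map_one_left, map_one_right, add_comm]
  · simp [inl, Extension.mul_def]

lemma pow_eq_one_of_proj_eq_one {n : ℕ} (hQ : ∀ q : Q, n • q = 0) {x : c.Extension}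
    (hx : c.proj x = 1) : x ^ n = 1 := by
  rw [eq_inl_of_proj_eq_one hx, ← map_pow, ← ofAdd_nsmul, hQ, ofAdd_zero, map_one]

lemma commutatorElement_eq_inl {x y : c.Extension} (h : Commute (c.proj x) (c.proj y)) :
    ⁅x, y⁆ = c.inl (.ofAdd (c (c.proj x) (c.proj y) - c (c.proj y) (c.proj x))) := by
  have hxy : x * y = c.inl (.ofAdd (c x.snd y.snd - c y.snd x.snd)) * (y * x) := by
    rw [inl_mul]
    refine Extension.ext ?_ h.eq
    simp only [Extension.mul_def, toAdd_ofAdd]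
    abel
  rw [commutatorElement_def, mul_assoc, ← mul_inv_rev, hxy, mul_inv_cancel_right]
  rfl

lemma commutator_sup_closure_pow_le_ker {F : Type*} [Group F] {R : Subgroup F} {n : ℕ}
    (hQ : ∀ q : Q, n • q = 0)
    (φ : F →* c.Extension) (hR : R ≤ (c.proj.comp φ).ker) :
    ⁅(⊤ : Subgroup F), R⁆ ⊔ Subgroup.closure {x | ∃ r ∈ R, x = r ^ n} ≤ φ.ker := by
  refine sup_le ?_ ?_
  · rw [Subgroup.commutator_le]
    intro f _ r hr
    rw [MonoidHom.mem_ker, map_commutatorElement, commutatorElement_eq_one_iff_commute]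
    exact (commute_of_proj_eq_one (hR hr) (φ f)).symm
  · rw [Subgroup.closure_le]
    rintro _ ⟨r, hr, rfl⟩
    rw [SetLike.mem_coe, MonoidHom.mem_ker, map_pow]
    exact pow_eq_one_of_proj_eq_one hQ (hR hr)

lemma exists_lift_freeGroup {α : Type*} (ψ : FreeGroup α →* G) :
    ∃ φ : FreeGroup α →* c.Extension, c.proj.comp φ = ψ :=
  ⟨FreeGroup.lift fun a => ⟨0, ψ (.of a)⟩, FreeGroup.ext_hom _ _ fun _ => by
    simp [proj]⟩

end NormalizedTwoCocycle

section BarComplex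

variable (k : Type) [CommRing k] (G : Type) [Group G]

lemma barD32_single (g h j : G) :
    barD32 k G (Finsupp.single (g, h, j) 1) =
      Finsupp.single (h, j) 1 - Finsupp.single (g * h, j) 1
        + Finsupp.single (g, h * j) 1 - Finsupp.single (g, h) 1 := by
  simp [barD32]

abbrev BarChains₂ModBoundaries : Type := ((G × G) →₀ k) ⧸ LinearMap.range (barD32 k G)

noncomputable def universalCocycle : NormalizedTwoCocycle G (BarChains₂ModBoundaries k G) where
  toFun g h := Submodule.Quotient.mk (Finsupp.single (g, h) 1)
    - Submodule.Quotient.mk (Finsupp.single (1, 1) 1)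
  map_one_one := sub_self _
  cocycle g h j := by
    have hb : Submodule.Quotient.mk (p := LinearMap.range (barD32 k G))
        (barD32 k G (Finsupp.single (g, h, j) 1)) = 0 :=
      (Submodule.Quotient.mk_eq_zero _).mpr (LinearMap.mem_range_self _ _)
    simp only [barD32_single, Submodule.Quotient.mk_add, Submodule.Quotient.mk_sub] at hb
    linear_combination (norm := abel) -hb

end BarComplex

theorem cycle_null_of_commutator_mem_general (α : Type) (R : Subgroup (FreeGroup α)) [R.Normal]
    (ℓ : ℕ) (e₁ e₂ : FreeGroup α)
    (h : ⁅e₁, e₂⁆ ∈ ⁅(⊤ : Subgroup (FreeGroup α)), R⁆ ⊔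
        Subgroup.closure {x | ∃ r ∈ R, x = r ^ ℓ})
    (hcomm : Commute (QuotientGroup.mk e₁ : FreeGroup α ⧸ R) (QuotientGroup.mk e₂)) :
    Finsupp.single ((QuotientGroup.mk e₁ : FreeGroup α ⧸ R), (QuotientGroup.mk e₂ : FreeGroup α ⧸ R)) (1 : ZMod ℓ)
      - Finsupp.single ((QuotientGroup.mk e₂ : FreeGroup α ⧸ R), (QuotientGroup.mk e₁ : FreeGroup α ⧸ R)) 1
      ∈ LinearMap.range (barD32 (ZMod ℓ) (FreeGroup α ⧸ R)) := by
  set c := universalCocycle (ZMod ℓ) (FreeGroup α ⧸ R)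
  obtain ⟨φ, hφ⟩ := c.exists_lift_freeGroup (QuotientGroup.mk' R)
  have hproj (w : FreeGroup α) : c.proj (φ w) = QuotientGroup.mk w := DFunLike.congr_fun hφ w
  have hker : φ ⁅e₁, e₂⁆ = 1 :=
    c.commutator_sup_closure_pow_le_ker (ZModModule.char_nsmul_eq_zero ℓ) φ
      (by rw [hφ, QuotientGroup.ker_mk']) h
  have hsymm : c (QuotientGroup.mk e₁) (QuotientGroup.mk e₂)
      = c (QuotientGroup.mk e₂) (QuotientGroup.mk e₁) := by
    rwa [map_commutatorElement, NormalizedTwoCocycle.commutatorElement_eq_inl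
      (by rwa [hproj, hproj]), hproj, hproj, map_eq_one_iff _
      NormalizedTwoCocycle.inl_injective, ofAdd_eq_one, sub_eq_zero] at hker
  rw [← Submodule.Quotient.mk_eq_zero, Submodule.Quotient.mk_sub, sub_eq_zero]
  simpa [c, universalCocycle] using hsymm

/-- If the commutator `[e₁,e₂]` of two elements of a free group `F` lies in `[F,R]·Rˡ`,
and the images `ē₁, ē₂` commute in `G = F/R`, then the 2-cycle `[ē₁|ē₂] - [ē₂|ē₁]` is a
boundary, i.e. its class vanishes in `H₂(G; 𝔽_ℓ)`. -/
theorem cycle_null_of_commutator_mem (α : Type) (R : Subgroup (FreeGroup α)) [R.Normal]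
    (ℓ : ℕ) [Fact (Nat.Prime ℓ)] (e₁ e₂ : FreeGroup α)
    (h : ⁅e₁, e₂⁆ ∈ ⁅(⊤ : Subgroup (FreeGroup α)), R⁆ ⊔
        Subgroup.closure {x | ∃ r ∈ R, x = r ^ ℓ})
    (hcomm : Commute (QuotientGroup.mk e₁ : FreeGroup α ⧸ R) (QuotientGroup.mk e₂)) :
    Finsupp.single ((QuotientGroup.mk e₁ : FreeGroup α ⧸ R), (QuotientGroup.mk e₂ : FreeGroup α ⧸ R)) (1 : ZMod ℓ)
      - Finsupp.single ((QuotientGroup.mk e₂ : FreeGroup α ⧸ R), (QuotientGroup.mk e₁ : FreeGroup α ⧸ R)) 1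
      ∈ LinearMap.range (barD32 (ZMod ℓ) (FreeGroup α ⧸ R)) :=
  cycle_null_of_commutator_mem_general α R ℓ e₁ e₂ h hcomm
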